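/- arXiv:1909.12412 — 4 statements merged into one kernel-verified Lean document; each statement's English description precedes it below -/
import Mathlib

section
/- Suppose the law of a random element X of an inner-product space is H-symmetric about a unique point f_c, meaning P(X ∈ H) ≥ 1/2 for every closed halfspace H containing f_c and P(X ∈ H) < 1/2 for every closed halfspace not containing f_c. Then the inner-product-based depth D_ip(f) = inf_{‖g‖=1, g ∈ G} P[⟨X − f, g⟩ ≥ 0] is maximized at f = f_c, with D_ip(f_c) ≥ 1/2 and D_ip(f) < 1/2 for any f ≠ f_c (provided G contains a unit vector separating f from f_c). -/
open MeasureTheory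

theorem ip_depth_max_at_center_general {Ω H : Type*} [MeasurableSpace Ω]
    [NormedAddCommGroup H] [InnerProductSpace ℝ H]
    (μ : Measure Ω)
    (X : Ω → H) (G : Set H) (f_c : H)
    (hsym_in : ∀ g : H, g ≠ 0 → ∀ h : H, (0 : ℝ) ≤ inner ℝ (f_c - h) g →
      (1 : ENNReal) / 2 ≤ μ {ω | (0 : ℝ) ≤ inner ℝ (X ω - h) g})
    (hsym_out : ∀ g : H, g ≠ 0 → ∀ h : H, inner ℝ (f_c - h) g < (0 : ℝ) →
      μ {ω | (0 : ℝ) ≤ inner ℝ (X ω - h) g} < 1 / 2)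
    (D : H → ENNReal)
    (hD : ∀ f, D f = ⨅ g : {g : H // g ∈ G ∧ ‖g‖ = 1},
      μ {ω | (0 : ℝ) ≤ inner ℝ (X ω - f) (g : H)}) :
    (1 : ENNReal) / 2 ≤ D f_c ∧
    ∀ f : H, f ≠ f_c →
      (∃ g ∈ G, ‖g‖ = 1 ∧ inner ℝ (f_c - f) g < (0 : ℝ)) →
      D f < 1 / 2 := by
  have ne_zero_of_norm_eq_one {g : H} (hg : ‖g‖ = 1) : g ≠ 0 :=
    norm_ne_zero_iff.mp (by rw [hg]; exact one_ne_zero)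
  refine ⟨?_, ?_⟩
  · rw [hD]
    refine le_iInf fun ⟨g, _, hg⟩ => ?_
    exact hsym_in g (ne_zero_of_norm_eq_one hg) f_c (by simp)
  · rintro f - ⟨g, hgG, hg, hsep⟩
    calc D f ≤ μ {ω | (0 : ℝ) ≤ inner ℝ (X ω - f) g} := by
          rw [hD]; exact iInf_le_of_le ⟨g, hgG, hg⟩ le_rfl
      _ < 1 / 2 := hsym_out g (ne_zero_of_norm_eq_one hg) f hsep

/-- Maximality at the center of the inner-product-based depth under halfspace
symmetry: if the law of `X` is H-symmetric about `f_c` (probability at least 1/2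
for every closed halfspace containing `f_c`, and strictly less than 1/2 for every
closed halfspace not containing `f_c`), then
`D_ip(f_c) ≥ 1/2`, and `D_ip(f) < 1/2` for every `f ≠ f_c` for which `G`
contains a unit vector separating `f` from `f_c`. -/
theorem ip_depth_max_at_center {Ω H : Type*} [MeasurableSpace Ω]
    [NormedAddCommGroup H] [InnerProductSpace ℝ H]
    (μ : Measure Ω) [IsProbabilityMeasure μ]
    (X : Ω → H) (G : Set H) (f_c : H)
    (hsym_in : ∀ g : H, g ≠ 0 → ∀ h : H, (0 : ℝ) ≤ inner ℝ (f_c - h) g →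
      (1 : ENNReal) / 2 ≤ μ {ω | (0 : ℝ) ≤ inner ℝ (X ω - h) g})
    (hsym_out : ∀ g : H, g ≠ 0 → ∀ h : H, inner ℝ (f_c - h) g < (0 : ℝ) →
      μ {ω | (0 : ℝ) ≤ inner ℝ (X ω - h) g} < 1 / 2)
    (D : H → ENNReal)
    (hD : ∀ f, D f = ⨅ g : {g : H // g ∈ G ∧ ‖g‖ = 1},
      μ {ω | (0 : ℝ) ≤ inner ℝ (X ω - f) (g : H)}) :
    (1 : ENNReal) / 2 ≤ D f_c ∧
    ∀ f : H, f ≠ f_c →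
      (∃ g ∈ G, ‖g‖ = 1 ∧ inner ℝ (f_c - f) g < (0 : ℝ)) →
      D f < 1 / 2 :=
  ip_depth_max_at_center_general μ X G f_c hsym_in hsym_out D hD
end

section
/- The inner-product-based depth vanishes at infinity: D_ip(f) = inf_{g ∈ G, ‖g‖=1} P[⟨X − f, g⟩ ≥ 0] ≤ P[‖X‖ ≥ ‖f‖] whenever f/‖f‖ ∈ G (f ≠ 0); consequently D_ip(f) → 0 as ‖f‖ → ∞. -/
open MeasureTheory Filter Topology

/-! Testing the depth of `f ≠ 0` against the single direction `g = f / ‖f‖` gives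
`{⟪X - f, g⟫ ≥ 0} = {⟪X, f⟫ ≥ ‖f‖²} ⊆ {‖X‖ ≥ ‖f‖}` by Cauchy–Schwarz, and the tail
probabilities `P[‖X‖ ≥ r]` of a single random element tend to `0` as `r → ∞`. -/

lemma norm_le_norm_of_inner_sub_nonneg {H : Type*} [NormedAddCommGroup H]
    [InnerProductSpace ℝ H] {x f : H} (h : 0 ≤ inner ℝ (x - f) (‖f‖⁻¹ • f)) :
    ‖f‖ ≤ ‖x‖ := by
  rcases eq_or_ne f 0 with rfl | hf
  · simp
  have hfpos : 0 < ‖f‖ := norm_pos_iff.mpr hf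
  rw [inner_smul_right, inner_sub_left, real_inner_self_eq_norm_sq] at h
  have hsq : ‖f‖ ^ 2 ≤ inner ℝ x f := by
    nlinarith [mul_le_mul_of_nonneg_left h hfpos.le, mul_inv_cancel₀ hfpos.ne']
  have hcs : ‖f‖ * ‖f‖ ≤ ‖x‖ * ‖f‖ := by nlinarith [real_inner_le_norm x f]
  exact le_of_mul_le_mul_right hcs hfpos

lemma tendsto_measure_setOf_le_atTop {Ω : Type*} [MeasurableSpace Ω] {μ : Measure Ω}
    [IsFiniteMeasure μ] {h : Ω → ℝ} (hh : AEMeasurable h μ) :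
    Tendsto (fun r : ℝ ↦ μ {ω | r ≤ h ω}) atTop (𝓝 0) := by
  have hempty : ⋂ r : ℝ, {ω | r ≤ h ω} = ∅ :=
    Set.eq_empty_of_forall_notMem fun ω hω ↦
      (lt_add_one (h ω)).not_ge (Set.mem_iInter.mp hω (h ω + 1))
  have := tendsto_measure_iInter_atTop (μ := μ)
    (fun r ↦ nullMeasurableSet_le aemeasurable_const hh)
    (fun r s hrs ω (hω : s ≤ h ω) ↦ hrs.trans hω) ⟨0, measure_ne_top μ _⟩
  rwa [hempty, measure_empty] at this

/-- The inner-product-based depth vanishes at infinity: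
if `f ≠ 0` and `f/‖f‖ ∈ G`, then
`D_ip(f) ≤ P[‖X‖ ≥ ‖f‖]`; consequently for every `ε > 0` there is `M` such that
`‖f‖ ≥ M` (and `f/‖f‖ ∈ G`) implies `D_ip(f) ≤ ε`. -/
theorem ip_depth_vanishing_at_infinity {Ω H : Type*} [MeasurableSpace Ω]
    [NormedAddCommGroup H] [InnerProductSpace ℝ H]
    [MeasurableSpace H] [OpensMeasurableSpace H]
    (μ : Measure Ω) [IsProbabilityMeasure μ]
    (X : Ω → H) (hX : Measurable X) (G : Set H)
    (D : H → ENNReal)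
    (hD : ∀ f, D f = ⨅ g : {g : H // g ∈ G ∧ ‖g‖ = 1},
      μ {ω | (0 : ℝ) ≤ inner ℝ (X ω - f) (g : H)}) :
    (∀ f : H, f ≠ 0 → ‖f‖⁻¹ • f ∈ G → D f ≤ μ {ω | ‖f‖ ≤ ‖X ω‖}) ∧
    (∀ ε : ENNReal, 0 < ε → ∃ M : ℝ, ∀ f : H, f ≠ 0 → ‖f‖⁻¹ • f ∈ G →
      M ≤ ‖f‖ → D f ≤ ε) := by
  have depth_le : ∀ f : H, f ≠ 0 → ‖f‖⁻¹ • f ∈ G → D f ≤ μ {ω | ‖f‖ ≤ ‖X ω‖} := by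
    intro f hf hG
    have hunit : ‖‖f‖⁻¹ • f‖ = 1 := norm_smul_inv_norm hf
    rw [hD]
    exact (iInf_le _ ⟨‖f‖⁻¹ • f, hG, hunit⟩).trans
      (measure_mono fun ω ↦ norm_le_norm_of_inner_sub_nonneg)
  refine ⟨depth_le, fun ε hε ↦ ?_⟩
  have tail := tendsto_measure_setOf_le_atTop (hX.norm.aemeasurable (μ := μ))
  obtain ⟨M, hM⟩ := (tail.eventually (eventually_le_nhds hε)).exists_forall_of_atTop
  exact ⟨M, fun f hf hG hMf ↦ (depth_le f hf hG).trans (hM _ hMf)⟩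
end

section
/- For a zero-mean finite-dimensional Gaussian process with covariance eigenvalues λ_1,…,λ_P > 0 and nonzero observation f_obs, the inner-product-based (halfspace) depth with respect to the RKHS inner product admits the closed form D_ip(f_obs) = inf_{‖g‖_{H_K}=1} P[⟨X − f_obs, g⟩_{H_K} ≥ 0] = 1 − Φ(‖f_obs‖_{H_K}), where Φ is the standard normal CDF. -/
/-!
For a unit direction `g` the pairing `⟨X, g⟩_{H_K} = ∑ f_p g_p / λ_p` is a sum of independent
centred Gaussians with total variance `‖g‖²_{H_K} = 1`, so it is standard normal and the
halfspace probability is `1 - Φ(⟨f_obs, g⟩_{H_K})`. This is antitone in `⟨f_obs, g⟩_{H_K}`,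
whose supremum over the unit sphere is `‖f_obs‖_{H_K}` by Cauchy–Schwarz, attained at
`g = f_obs / ‖f_obs‖_{H_K}`.
-/

open MeasureTheory ProbabilityTheory
open scoped NNReal ENNReal

namespace ProbabilityTheory

lemma measure_Ici_eq_ofReal_one_sub_cdf (ν : Measure ℝ) [IsProbabilityMeasure ν]
    [NullSingletonClass ν] (x : ℝ) :
    ν (Set.Ici x) = ENNReal.ofReal (1 - cdf ν x) := by
  rw [← Set.compl_Iio, prob_compl_eq_one_sub measurableSet_Iio, measure_congr Iio_ae_eq_Iic,
    ← ofReal_cdf, ENNReal.ofReal_sub _ (cdf_nonneg _ x), ENNReal.ofReal_one]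

lemma antitone_ofReal_one_sub_cdf (ν : Measure ℝ) :
    Antitone fun x ↦ ENNReal.ofReal (1 - cdf ν x) :=
  fun _ _ hxy ↦ ENNReal.ofReal_le_ofReal (sub_le_sub_left (monotone_cdf ν hxy) 1)

variable {Ω ι : Type*} [MeasurableSpace Ω] {μ : Measure Ω} [IsProbabilityMeasure μ]
  {X : ι → Ω → ℝ}

lemma iIndepFun.map_sum_eq_gaussianReal (hX : ∀ i, Measurable (X i)) (hindep : iIndepFun X μ)
    {m : ι → ℝ} {v : ι → ℝ≥0} (hXg : ∀ i, μ.map (X i) = gaussianReal (m i) (v i))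
    (s : Finset ι) :
    μ.map (∑ i ∈ s, X i) = gaussianReal (∑ i ∈ s, m i) (∑ i ∈ s, v i) := by
  classical
  induction s using Finset.induction_on with
  | empty => simp [gaussianReal_zero_var, Pi.zero_def]
  | insert j s hj ih =>
    simp only [Finset.sum_insert hj]
    rw [add_comm (X j), add_comm (m j), add_comm (v j)]
    exact gaussianReal_add_gaussianReal_of_indepFun
      (hindep.indepFun_finsetSum_of_notMem hX hj) ih (hXg j)

lemma iIndepFun.map_linearCombination_eq_gaussianReal [Fintype ι] (hX : ∀ i, Measurable (X i))
    (hindep : iIndepFun X μ) {v : ι → ℝ≥0} (hXg : ∀ i, μ.map (X i) = gaussianReal 0 (v i))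
    (a : ι → ℝ) {w : ℝ≥0} (hw : ∑ i, a i ^ 2 * (v i : ℝ) = w) :
    μ.map (fun ω ↦ ∑ i, a i * X i ω) = gaussianReal 0 w := by
  have hscaled : ∀ i, μ.map (fun ω ↦ a i * X i ω)
      = gaussianReal 0 (NNReal.mk (a i ^ 2) (sq_nonneg _) * v i) := fun i ↦ by
    change μ.map ((a i * ·) ∘ X i) = _
    rw [← Measure.map_map (measurable_const_mul (a i)) (hX i), hXg i,
      gaussianReal_map_const_mul, mul_zero]
  have hsum := (hindep.comp (fun i x ↦ a i * x) fun i ↦ measurable_const_mul (a i))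
    |>.map_sum_eq_gaussianReal (fun i ↦ (hX i).const_mul (a i)) hscaled Finset.univ
  rw [Finset.sum_const_zero] at hsum
  convert hsum using 2
  · ext ω
    simp [Finset.sum_apply]
  · ext
    push_cast
    exact hw.symm

lemma iIndepFun.measure_halfspace_eq_ofReal_one_sub_cdf [Fintype ι] (hX : ∀ i, Measurable (X i))
    (hindep : iIndepFun X μ) {lam : ι → ℝ≥0} (hXg : ∀ i, μ.map (X i) = gaussianReal 0 (lam i))
    (c g : ι → ℝ) (hg : ∑ i, g i ^ 2 / (lam i : ℝ) = 1) :
    μ {ω | 0 ≤ ∑ i, (X i ω - c i) * g i / (lam i : ℝ)}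
      = ENNReal.ofReal (1 - cdf (gaussianReal 0 1) (∑ i, c i * g i / (lam i : ℝ))) := by
  have hvar : ∑ i, (g i / lam i) ^ 2 * (lam i : ℝ) = (1 : ℝ≥0) := by
    rw [NNReal.coe_one, ← hg]
    refine Finset.sum_congr rfl fun i _ ↦ ?_
    rcases eq_or_ne (lam i : ℝ) 0 with h | h
    · simp [h]
    · field_simp
  have hlaw := hindep.map_linearCombination_eq_gaussianReal hX hXg _ hvar
  have hsplit : ∀ ω, ∑ i, (X i ω - c i) * g i / (lam i : ℝ)
      = ∑ i, g i / lam i * X i ω - ∑ i, c i * g i / (lam i : ℝ) := fun ω ↦ by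
    rw [← Finset.sum_sub_distrib]
    exact Finset.sum_congr rfl fun i _ ↦ by ring
  have hset : {ω | 0 ≤ ∑ i, (X i ω - c i) * g i / (lam i : ℝ)}
      = (fun ω ↦ ∑ i, g i / lam i * X i ω) ⁻¹' Set.Ici (∑ i, c i * g i / (lam i : ℝ)) := by
    ext ω
    rw [Set.mem_ofPred_eq, hsplit, sub_nonneg, Set.mem_preimage, Set.mem_Ici]
  have := nullSingletonClass_gaussianReal (μ := 0) one_ne_zero
  rw [hset, ← Measure.map_apply (by fun_prop) measurableSet_Ici, hlaw,
    measure_Ici_eq_ofReal_one_sub_cdf]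

end ProbabilityTheory

section WeightedEuclidean

variable {ι : Type*} (c : ι → ℝ) (lam : ι → ℝ≥0)

lemma sum_mul_div_le_sqrt_mul_sqrt (s : Finset ι) (g : ι → ℝ) :
    ∑ i ∈ s, c i * g i / (lam i : ℝ)
      ≤ √(∑ i ∈ s, c i ^ 2 / (lam i : ℝ)) * √(∑ i ∈ s, g i ^ 2 / (lam i : ℝ)) := by
  have hsq : ∀ u : ι → ℝ, ∀ i, (u i / √(lam i)) ^ 2 = u i ^ 2 / (lam i : ℝ) := fun u i ↦ by
    rw [div_pow, Real.sq_sqrt (lam i).coe_nonneg]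
  calc ∑ i ∈ s, c i * g i / (lam i : ℝ)
      = ∑ i ∈ s, c i / √(lam i) * (g i / √(lam i)) := by
        refine Finset.sum_congr rfl fun i _ ↦ ?_
        rw [div_mul_div_comm, Real.mul_self_sqrt (lam i).coe_nonneg]
    _ ≤ √(∑ i ∈ s, (c i / √(lam i)) ^ 2) * √(∑ i ∈ s, (g i / √(lam i)) ^ 2) :=
        Real.sum_mul_le_sqrt_mul_sqrt _ _ _
    _ = _ := by simp_rw [hsq]

variable [Fintype ι]

lemma sum_sq_div_pos (hlam : ∀ i, 0 < lam i) (hc : c ≠ 0) : 0 < ∑ i, c i ^ 2 / (lam i : ℝ) := by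
  obtain ⟨j, hj⟩ := Function.ne_iff.mp hc
  refine Finset.sum_pos' (fun i _ ↦ by positivity) ⟨j, Finset.mem_univ j, ?_⟩
  exact div_pos (lt_of_le_of_ne (sq_nonneg _) (pow_ne_zero 2 hj).symm) (hlam j)

lemma exists_sum_sq_div_eq_one_and_sum_mul_div_eq_sqrt (hc : 0 < ∑ i, c i ^ 2 / (lam i : ℝ)) :
    ∃ g : ι → ℝ, ∑ i, g i ^ 2 / (lam i : ℝ) = 1 ∧
      ∑ i, c i * g i / (lam i : ℝ) = √(∑ i, c i ^ 2 / (lam i : ℝ)) := by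
  set r := √(∑ i, c i ^ 2 / (lam i : ℝ))
  refine ⟨fun i ↦ c i / r, ?_, ?_⟩
  · calc ∑ i, (c i / r) ^ 2 / (lam i : ℝ) = (∑ i, c i ^ 2 / (lam i : ℝ)) / r ^ 2 := by
          rw [Finset.sum_div]; congr! 1 with i; ring
      _ = 1 := by rw [Real.sq_sqrt hc.le, div_self hc.ne']
  · calc ∑ i, c i * (c i / r) / (lam i : ℝ) = (∑ i, c i ^ 2 / (lam i : ℝ)) / r := by
          rw [Finset.sum_div]; congr! 1 with i; ring
      _ = r := Real.div_sqrt

end WeightedEuclidean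

/-- Closed form of the inner-product-based (halfspace) depth for a
finite-dimensional zero-mean Gaussian process, in RKHS coordinates:
`inf_{‖g‖_{H_K} = 1} P[⟨X - f_obs, g⟩_{H_K} ≥ 0] = 1 - Φ(‖f_obs‖_{H_K})`,
where `Φ` is the standard normal CDF. -/
theorem ip_depth_closed_form_gaussian {Ω : Type*} [MeasurableSpace Ω]
    (μ : Measure Ω) [IsProbabilityMeasure μ]
    (P : ℕ) (lam : Fin P → NNReal) (hlam : ∀ p, 0 < lam p)
    (f : Fin P → Ω → ℝ) (hmeas : ∀ p, Measurable (f p))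
    (hgauss : ∀ p, μ.map (f p) = gaussianReal 0 (lam p))
    (hindep : iIndepFun f μ)
    (c : Fin P → ℝ) (hc : c ≠ 0) :
    (⨅ g : {g : Fin P → ℝ // ∑ p, (g p) ^ 2 / (lam p : ℝ) = 1},
        μ {ω | (0 : ℝ) ≤ ∑ p, (f p ω - c p) * (g : Fin P → ℝ) p / (lam p : ℝ)})
      = ENNReal.ofReal
          (1 - cdf (gaussianReal 0 1) (Real.sqrt (∑ p, (c p) ^ 2 / (lam p : ℝ)))) := by
  have hdepth := hindep.measure_halfspace_eq_ofReal_one_sub_cdf hmeas hgauss c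
  obtain ⟨g₀, hg₀, hcg₀⟩ :=
    exists_sum_sq_div_eq_one_and_sum_mul_div_eq_sqrt c lam (sum_sq_div_pos c lam hlam hc)
  refine le_antisymm (iInf_le_of_le ⟨g₀, hg₀⟩ ?_) (le_iInf fun g ↦ ?_)
  · rw [hdepth g₀ hg₀, hcg₀]
  · rw [hdepth g g.2]
    refine antitone_ofReal_one_sub_cdf _ ?_
    simpa [g.2] using sum_mul_div_le_sqrt_mul_sqrt c lam Finset.univ g
end

section
/- Let C be a covariance operator with orthonormal eigenfunctions {φ_p} and positive eigenvalues {λ_p}_{p=1}^∞ (infinitely many), and let f be a sample from GP(0, C). For each P, let D_P(f) = 1 − Φ(sqrt(Σ_{p=1}^P ⟨f,φ_p⟩²/λ_p)) be the depth of the P-th order truncation. Then D_P(f) → 0 almost surely as P → ∞. -/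
/-!
Standardize the coefficients: `Z p = f p / √λ_p` are i.i.d. `N(0, 1)`, so the independent
events `{1 ≤ Z p}` all have the same positive probability and, by the second Borel–Cantelli
lemma, almost surely infinitely many of them occur. On such an `ω` the nonnegative terms
`Z p ω ^ 2 = f p ω ^ 2 / λ_p` do not tend to `0`, so their partial sums diverge, and
`1 - Φ(√·)` of a divergent sequence tends to `0`.
-/

open MeasureTheory ProbabilityTheory Filter Topology

lemma tendsto_one_sub_cdf_atTop (ν : Measure ℝ) [IsProbabilityMeasure ν] :
    Tendsto (fun x => 1 - cdf ν x) atTop (𝓝 0) := by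
  simpa using (tendsto_cdf_atTop ν).const_sub (1 : ℝ)

lemma tendsto_sum_range_atTop_of_frequently_le {g : ℕ → ℝ} {c : ℝ} (hg : ∀ n, 0 ≤ g n)
    (hc : 0 < c) (hfreq : ∃ᶠ n in atTop, c ≤ g n) :
    Tendsto (fun n => ∑ i ∈ Finset.range n, g i) atTop atTop := by
  refine (not_summable_iff_tendsto_nat_atTop_of_nonneg hg).mp fun hsum => ?_
  have hsmall : ∀ᶠ n in atTop, g n < c := hsum.tendsto_atTop_zero.eventually (gt_mem_nhds hc)
  exact hfreq (hsmall.mono fun n hn => hn.not_ge)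

lemma ae_frequently_mem_of_iIndepFun {Ω β : Type*} [MeasurableSpace Ω] [MeasurableSpace β]
    {μ : Measure Ω} [IsProbabilityMeasure μ] {ν : Measure β} {X : ℕ → Ω → β}
    (hX : ∀ n, Measurable (X n)) (hlaw : ∀ n, μ.map (X n) = ν) (hind : iIndepFun X μ)
    {S : Set β} (hS : MeasurableSet S) (hνS : ν S ≠ 0) :
    ∀ᵐ ω ∂μ, ∃ᶠ n in atTop, X n ω ∈ S := by
  have hmeas : ∀ n, MeasurableSet (X n ⁻¹' S) := fun n => hX n hS
  have hsets : iIndepSet (fun n => X n ⁻¹' S) μ :=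
    (iIndepSet_iff_meas_biInter hmeas).mpr fun t =>
      hind.measure_inter_preimage_eq_mul t fun _ _ => hS
  have hprob : ∀ n, μ (X n ⁻¹' S) = ν S := fun n => by
    rw [← Measure.map_apply (hX n) hS, hlaw n]
  have hlimsup : μ (limsup (fun n => X n ⁻¹' S) atTop) = 1 :=
    measure_limsup_eq_one hmeas hsets (by simp [hprob, ENNReal.tsum_const_eq_top_of_ne_zero hνS])
  have hae := (mem_ae_iff_prob_eq_one (MeasurableSet.measurableSet_limsup hmeas)).mpr hlimsup
  filter_upwards [hae] with ω hω
  exact mem_limsup_iff_frequently_mem.mp hω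

lemma gaussianReal_map_div_sqrt {v : NNReal} (hv : v ≠ 0) :
    (gaussianReal 0 v).map (· / √(v : ℝ)) = gaussianReal 0 1 := by
  rw [gaussianReal_map_div_const, zero_div]
  congr 1
  ext
  simp [Real.sq_sqrt v.coe_nonneg, hv]

lemma gaussianReal_Ici_ne_zero (m : ℝ) {v : NNReal} (hv : v ≠ 0) (a : ℝ) :
    gaussianReal m v (Set.Ici a) ≠ 0 := fun h => by
  simpa using gaussianReal_absolutelyContinuous' m hv h

/-- Degeneracy of truncated halfspace depth in infinite dimensions: if the
Karhunen–Loève coefficients `f p ~ N(0, λ p)` are independent with `λ p > 0` for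
all `p`, then the truncated depths
`D_P = 1 - Φ(√(∑_{p < P} (f p)²/λ p))` tend to `0` almost surely as `P → ∞`. -/
theorem truncated_depth_tendsto_zero {Ω : Type*} [MeasurableSpace Ω]
    (μ : Measure Ω) [IsProbabilityMeasure μ]
    (lam : ℕ → NNReal) (hlam : ∀ p, 0 < lam p)
    (f : ℕ → Ω → ℝ) (hmeas : ∀ p, Measurable (f p))
    (hgauss : ∀ p, μ.map (f p) = gaussianReal 0 (lam p))
    (hindep : iIndepFun f μ) :
    ∀ᵐ ω ∂μ,
      Tendsto (fun P : ℕ =>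
          1 - cdf (gaussianReal 0 1)
            (Real.sqrt (∑ p ∈ Finset.range P, (f p ω) ^ 2 / (lam p : ℝ))))
        atTop (nhds 0) := by
  set Z : ℕ → Ω → ℝ := fun p ω => f p ω / √(lam p : ℝ)
  have hZ_meas : ∀ p, Measurable (Z p) := fun p => (hmeas p).div_const _
  have hZ_law : ∀ p, μ.map (Z p) = gaussianReal 0 1 := fun p => by
    rw [show Z p = (· / √(lam p : ℝ)) ∘ f p from rfl,
      ← Measure.map_map (measurable_div_const _) (hmeas p), hgauss p,
      gaussianReal_map_div_sqrt (hlam p).ne']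
  have hZ_indep : iIndepFun Z μ := hindep.comp _ fun _ => measurable_div_const _
  have hZ_sq : ∀ p ω, Z p ω ^ 2 = f p ω ^ 2 / lam p := fun p ω => by
    simp only [Z, div_pow, Real.sq_sqrt (lam p).coe_nonneg]
  filter_upwards [ae_frequently_mem_of_iIndepFun hZ_meas hZ_law hZ_indep measurableSet_Ici
    (gaussianReal_Ici_ne_zero 0 one_ne_zero 1)] with ω hω
  have hfreq : ∃ᶠ p in atTop, 1 ≤ f p ω ^ 2 / lam p :=
    hω.mono fun p (hp : 1 ≤ Z p ω) => hZ_sq p ω ▸ one_le_pow₀ hp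
  have hsum := tendsto_sum_range_atTop_of_frequently_le (fun p => by positivity) one_pos hfreq
  exact (tendsto_one_sub_cdf_atTop _).comp (Real.tendsto_sqrt_atTop.comp hsum)
end
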